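/- Over F_2, with H = [[I, I, I],[I, P, Q]] as above, if P and Q are strongly noncommutative permutation matrices (PQ and QP differ in every column), then for every nonzero vector x of Hamming weight 1, the vector c = ((P+Q)x ; (I+Q)x ; (I+P)x) is not a codeword of the code defined by H (i.e., H·c ≠ 0). -/

import Mathlib

/-- A permutation matrix over a ring `R`. -/
def IsPermMatrix {n : Type*} [Fintype n] [DecidableEq n] {R : Type*} [Semiring R]
    (M : Matrix n n R) : Prop :=
  ∃ σ : Equiv.Perm n, M = σ.permMatrix R

/-!
In the second block row of `H`, `(P+Q)x + P(I+Q)x + Q(I+P)x = (PQ+QP)x` over `F_2`, since every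
other term occurs twice. For `x = e_j` this is column `j` of `PQ + QP`, which is nonzero exactly
when column `j` of `PQ` differs from column `j` of `QP`.
-/

open Matrix

section CharTwo

variable {m n R : Type*} [Fintype n] [DecidableEq n] [Ring R] [CharP R 2]

theorem add_add_mul_one_add_add_mul_one_add (P Q : Matrix n n R) :
    P + Q + (P * (1 + Q) + Q * (1 + P)) = P * Q + Q * P := by
  have add_self (M : Matrix n n R) : M + M = 0 := by
    ext; exact CharTwo.add_self_eq_zero _
  calc P + Q + (P * (1 + Q) + Q * (1 + P))
      = (P + P) + (Q + Q) + (P * Q + Q * P) := by simp only [mul_add, mul_one]; abel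
    _ = P * Q + Q * P := by rw [add_self, add_self, zero_add, zero_add]

theorem fromCols_one_fromCols_mulVec_sumElim (P Q : Matrix n n R) (x : n → R) :
    fromCols 1 (fromCols P Q) *ᵥ
        Sum.elim ((P + Q) *ᵥ x) (Sum.elim ((1 + Q) *ᵥ x) ((1 + P) *ᵥ x)) =
      (P * Q + Q * P) *ᵥ x := by
  rw [fromCols_mulVec_sumElim, fromCols_mulVec_sumElim, one_mulVec, mulVec_mulVec,
    mulVec_mulVec, ← add_mulVec, ← add_mulVec, add_add_mul_one_add_add_mul_one_add]

theorem add_mulVec_single_one_eq_zero_iff (A B : Matrix m n R) (j : n) :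
    (A + B) *ᵥ Pi.single j 1 = 0 ↔ ∀ i, A i j = B i j := by
  simp only [mulVec_single_one, funext_iff, col_apply, Matrix.add_apply,
    Pi.zero_apply, CharTwo.add_eq_zero]

end CharTwo

theorem near_codeword_not_codeword (N : ℕ)
    (P Q : Matrix (Fin N) (Fin N) (ZMod 2))
    (hsnc : ∀ j : Fin N, ∃ i : Fin N, (P * Q) i j ≠ (Q * P) i j)
    (x : Fin N → ZMod 2) (hx : ∃ j : Fin N, x = Pi.single j 1) :
    let H : Matrix (Fin N ⊕ Fin N) (Fin N ⊕ (Fin N ⊕ Fin N)) (ZMod 2) :=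
      Matrix.of fun i j =>
        match i, j with
        | Sum.inl a, Sum.inl b => (1 : Matrix (Fin N) (Fin N) (ZMod 2)) a b
        | Sum.inl a, Sum.inr (Sum.inl b) => (1 : Matrix (Fin N) (Fin N) (ZMod 2)) a b
        | Sum.inl a, Sum.inr (Sum.inr b) => (1 : Matrix (Fin N) (Fin N) (ZMod 2)) a b
        | Sum.inr a, Sum.inl b => (1 : Matrix (Fin N) (Fin N) (ZMod 2)) a b
        | Sum.inr a, Sum.inr (Sum.inl b) => P a b
        | Sum.inr a, Sum.inr (Sum.inr b) => Q a b
    let c : Fin N ⊕ (Fin N ⊕ Fin N) → ZMod 2 :=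
      Sum.elim ((P + Q).mulVec x)
        (Sum.elim ((1 + Q).mulVec x) ((1 + P).mulVec x))
    H.mulVec c ≠ 0 := by
  obtain ⟨j, rfl⟩ := hx
  obtain ⟨i, hi⟩ := hsnc j
  intro H c hHc
  have hH : H = fromRows (fromCols 1 (fromCols 1 1)) (fromCols 1 (fromCols P Q)) := by
    ext (_ | _) (_ | _ | _) <;> rfl
  have hsyndrome : (P * Q + Q * P) *ᵥ Pi.single j 1 = 0 := by
    rw [← fromCols_one_fromCols_mulVec_sumElim]
    simpa only [hH, c, fromRows_mulVec, Sum.elim_comp_inr, Pi.zero_comp] using congrArg (· ∘ Sum.inr) hHc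
  exact hi ((add_mulVec_single_one_eq_zero_iff _ _ j).1 hsyndrome i)
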